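/- arXiv:1604.06471 — 3 statements merged into one kernel-verified Lean document; each statement's English description precedes it below -/
import Mathlib

section
/- For every φ in X_∞ = closure of the Bruhat–Schwartz space D(ℚ_p^n) in the sup norm, the piecewise-constant interpolations P_N φ(x) = Σ_{i ∈ G_N^n} φ(i)·Ω(p^N‖x−i‖_p) converge uniformly to φ as N → ∞. -/
/-!
Let `r = p^{-N}` and `R = p^N`. In an ultrametric space two balls of radius `r` are disjoint
or equal, so when the centres `G_N` are `r`-separated, each `x` lies in at most one of the balls
`i + B(r)`: the interpolation `P_N φ(x)` is `φ(i)` for the centre `i` near `x` if `‖x‖ ≤ R`,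
and `0` if `‖x‖ > R`. Uniform continuity of `φ` controls the first case and its decay at infinity
the second, uniformly in `x`, once `r` is small and `R` is large.
-/

open scoped ZeroAtInfty
open Filter Topology

section UltrametricInterpolation

variable {E : Type*} [SeminormedAddCommGroup E] [IsUltrametricDist E] {G : Finset E} {r R : ℝ}

lemma sum_mul_ite_norm_sub_le_eq_of_separated
    (hsep : ∀ i ∈ G, ∀ j ∈ G, i ≠ j → r < ‖i - j‖) (f : E → ℝ) {x i : E} (hi : i ∈ G)
    (hxi : ‖x - i‖ ≤ r) :
    ∑ j ∈ G, f j * (if ‖x - j‖ ≤ r then 1 else 0) = f i := by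
  refine (Finset.sum_eq_single_of_mem i hi fun j hj hji => ?_).trans (by rw [if_pos hxi, mul_one])
  have hxj : ¬ ‖x - j‖ ≤ r := fun hxj => (hsep i hi j hj hji.symm).not_ge <|
    calc ‖i - j‖ = ‖(i - x) + (x - j)‖ := by rw [sub_add_sub_cancel]
      _ ≤ max ‖i - x‖ ‖x - j‖ := IsUltrametricDist.norm_add_le_max _ _
      _ ≤ r := max_le (by rwa [norm_sub_rev]) hxj
  rw [if_neg hxj, mul_zero]

lemma sum_mul_ite_norm_sub_le_eq_zero_of_lt_norm (hG : ∀ j ∈ G, ‖j‖ ≤ R) (hrR : r ≤ R)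
    (f : E → ℝ) {x : E} (hx : R < ‖x‖) :
    ∑ j ∈ G, f j * (if ‖x - j‖ ≤ r then 1 else 0) = 0 := by
  refine Finset.sum_eq_zero fun j hj => ?_
  have hxj : ¬ ‖x - j‖ ≤ r := fun hxj => hx.not_ge <|
    calc ‖x‖ = ‖(x - j) + j‖ := by rw [sub_add_cancel]
      _ ≤ max ‖x - j‖ ‖j‖ := IsUltrametricDist.norm_add_le_max _ _
      _ ≤ R := max_le (hxj.trans hrR) (hG j hj)
  rw [if_neg hxj, mul_zero]

lemma abs_sub_sum_mul_ite_norm_sub_le_le {ε : ℝ} (hG : ∀ j ∈ G, ‖j‖ ≤ R)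
    (hsep : ∀ i ∈ G, ∀ j ∈ G, i ≠ j → r < ‖i - j‖)
    (hcov : ∀ x : E, ‖x‖ ≤ R → ∃ i ∈ G, ‖x - i‖ ≤ r) (hrR : r ≤ R) (f : E → ℝ)
    (hf_osc : ∀ x y, ‖x - y‖ ≤ r → |f x - f y| ≤ ε) (hf_decay : ∀ x, R < ‖x‖ → |f x| ≤ ε)
    (x : E) :
    |f x - ∑ j ∈ G, f j * (if ‖x - j‖ ≤ r then 1 else 0)| ≤ ε := by
  rcases le_or_gt ‖x‖ R with hx | hx
  · obtain ⟨i, hi, hxi⟩ := hcov x hx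
    rw [sum_mul_ite_norm_sub_le_eq_of_separated hsep f hi hxi]
    exact hf_osc x i hxi
  · rw [sum_mul_ite_norm_sub_le_eq_zero_of_lt_norm hG hrR f hx, sub_zero]
    exact hf_decay x hx

end UltrametricInterpolation

lemma ZeroAtInftyContinuousMap.exists_forall_le_norm_dist_zero_lt {E β : Type*}
    [SeminormedAddCommGroup E] [PseudoMetricSpace β] [Zero β] (φ : C₀(E, β)) {ε : ℝ}
    (hε : 0 < ε) : ∃ R, ∀ x, R ≤ ‖x‖ → dist (φ x) 0 < ε := by
  have hφ := φ.zero_at_infty'.mono_left Metric.cobounded_le_cocompact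
  simpa using hasBasis_cobounded_norm.eventually_iff.1 (Metric.tendsto_nhds.1 hφ ε hε)

/-- For every `φ` in `X_∞ = C₀(ℚ_p^n, ℝ)` (the sup-norm closure of the Bruhat–Schwartz
space), the piecewise-constant interpolations `P_N φ = Σ_{i ∈ G_N} φ(i)·Ω(p^N‖x-i‖_p)`
converge uniformly to `φ` as `N → ∞`. -/
theorem stmt6 (p : ℕ) [Fact p.Prime] (n : ℕ)
    (G : ℕ → Finset (Fin n → ℚ_[p]))
    (hGmem : ∀ N : ℕ, ∀ i ∈ G N, ‖i‖ ≤ (p : ℝ) ^ (N : ℤ))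
    (hGsep : ∀ N : ℕ, ∀ i ∈ G N, ∀ j ∈ G N, i ≠ j → (p : ℝ) ^ (-(N : ℤ)) < ‖i - j‖)
    (hGcov : ∀ N : ℕ, ∀ x : Fin n → ℚ_[p], ‖x‖ ≤ (p : ℝ) ^ (N : ℤ) →
      ∃ i ∈ G N, ‖x - i‖ ≤ (p : ℝ) ^ (-(N : ℤ)))
    (φ : C₀(Fin n → ℚ_[p], ℝ)) :
    Filter.Tendsto (fun N : ℕ =>
        ⨆ x : Fin n → ℚ_[p],
          |φ x - ∑ i ∈ G N, φ i * (if ‖x - i‖ ≤ (p : ℝ) ^ (-(N : ℤ)) then (1 : ℝ) else 0)|)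
      Filter.atTop (nhds 0) := by
  have hp : (1 : ℝ) < p := by exact_mod_cast (Fact.out : p.Prime).one_lt
  have hpow : Tendsto (fun N : ℕ => (p : ℝ) ^ (N : ℤ)) atTop atTop := by
    simpa using tendsto_pow_atTop_atTop_of_one_lt hp
  have hpow_inv : Tendsto (fun N : ℕ => (p : ℝ) ^ (-(N : ℤ))) atTop (𝓝 0) :=
    hpow.inv_tendsto_atTop.congr fun N => (zpow_neg _ _).symm
  refine Metric.tendsto_nhds.2 fun ε hε => ?_
  obtain ⟨δ, hδ, hφδ⟩ := Metric.uniformContinuous_iff.1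
    (ZeroAtInftyContinuousMap.uniformContinuous φ) (ε / 2) (half_pos hε)
  obtain ⟨R, hR⟩ := φ.exists_forall_le_norm_dist_zero_lt (half_pos hε)
  filter_upwards [hpow.eventually_ge_atTop R, hpow_inv.eventually (gt_mem_nhds hδ)] with N hRN hδN
  have hrR : (p : ℝ) ^ (-(N : ℤ)) ≤ (p : ℝ) ^ (N : ℤ) := zpow_le_zpow_right₀ hp.le (by omega)
  have hsup := Real.iSup_le (abs_sub_sum_mul_ite_norm_sub_le_le (hGmem N) (hGsep N) (hGcov N) hrR φ
    (fun x y hxy => (hφδ (by rw [dist_eq_norm]; exact hxy.trans_lt hδN)).le)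
    (fun x hx => by simpa using (hR x (hRN.trans hx.le)).le)) (half_pos hε).le
  rw [Real.dist_eq, sub_zero, abs_of_nonneg (Real.iSup_nonneg fun _ => abs_nonneg _)]
  exact hsup.trans_lt (half_lt_self hε)
end

section
/- Let J : ℚ_p^n → ℝ_{≥0} be a continuous radial function with ∫ J(‖x‖_p) d^n x = 1, and let J_N(‖x‖_p) = J(‖x‖_p)·Ω(p^{-N}‖x‖_p) be its truncation to the ball B_N^n. Then for any φ ∈ X_∞ and any N ≥ 1, the convolution satisfies (J_N * P_N φ)(x) = Ω(p^{-N}‖x‖_p)·(J * P_N φ)(x); i.e., the truncated convolution equals the restriction to B_N^n of the full convolution. -/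
/-!
In an ultrametric space every point of a closed ball is a centre of it. Each sampling ball
`‖y - i‖ ≤ p^{-N}` has its centre `i` in `B_N`, so `P_N φ` is supported in `B_N`; and for `y ∈ B_N`
the ball `B_N` around `y` is `B_N` itself, so `‖x - y‖ ≤ p^N ↔ ‖x‖ ≤ p^N`. Hence the two integrands
agree pointwise once the indicator of `B_N` at `x` is pulled out of the integral.
-/

open scoped ZeroAtInfty
open MeasureTheory

section Ultrametric

variable {E : Type*} [SeminormedAddCommGroup E] [IsUltrametricDist E]

theorem norm_sub_le_iff_of_norm_le {x y : E} {R : ℝ} (hy : ‖y‖ ≤ R) :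
    ‖x - y‖ ≤ R ↔ ‖x‖ ≤ R := by
  have hball := IsUltrametricDist.closedBall_eq_of_mem (mem_closedBall_zero_iff.2 hy)
  rw [← mem_closedBall_iff_norm, ← mem_closedBall_zero_iff, hball]

theorem norm_le_of_sum_mul_indicator_ne_zero {G : Finset E} {c : E → ℝ} {r R : ℝ}
    (hrR : r ≤ R) (hG : ∀ i ∈ G, ‖i‖ ≤ R) {y : E}
    (hy : ∑ i ∈ G, c i * (if ‖y - i‖ ≤ r then (1 : ℝ) else 0) ≠ 0) : ‖y‖ ≤ R := by
  obtain ⟨i, hi, hne⟩ := Finset.exists_ne_zero_of_sum_ne_zero hy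
  have hyi : ‖y - i‖ ≤ r := by
    by_contra h
    simp [h] at hne
  exact (norm_sub_le_iff_of_norm_le (hG i hi)).1 (hyi.trans hrR)

theorem integral_mul_indicator_norm_sub_le [MeasurableSpace E] (μ : Measure E)
    (g f : E → ℝ) {R : ℝ} (hf : ∀ y, f y ≠ 0 → ‖y‖ ≤ R) (x : E) :
    ∫ y, (g (x - y) * (if ‖x - y‖ ≤ R then (1 : ℝ) else 0)) * f y ∂μ
      = (if ‖x‖ ≤ R then (1 : ℝ) else 0) * ∫ y, g (x - y) * f y ∂μ := by
  rw [← integral_const_mul]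
  congr 1
  funext y
  by_cases hy : f y = 0
  · simp [hy]
  · simp only [norm_sub_le_iff_of_norm_le (hf y hy)]
    ring

end Ultrametric

theorem stmt8_general (p : ℕ) [Fact p.Prime] (n : ℕ)
    [MeasurableSpace (Fin n → ℚ_[p])]
    (μ : Measure (Fin n → ℚ_[p]))
    (J : ℝ → ℝ)
    (N : ℕ)
    (G : Finset (Fin n → ℚ_[p]))
    (hGmem : ∀ i ∈ G, ‖i‖ ≤ (p : ℝ) ^ (N : ℤ))
    (φ : C₀(Fin n → ℚ_[p], ℝ)) (x : Fin n → ℚ_[p]) :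
    (∫ y, (J ‖x - y‖ * (if ‖x - y‖ ≤ (p : ℝ) ^ (N : ℤ) then (1 : ℝ) else 0)) *
        (∑ i ∈ G, φ i * (if ‖y - i‖ ≤ (p : ℝ) ^ (-(N : ℤ)) then (1 : ℝ) else 0)) ∂μ)
      = (if ‖x‖ ≤ (p : ℝ) ^ (N : ℤ) then (1 : ℝ) else 0) *
        ∫ y, J ‖x - y‖ *
          (∑ i ∈ G, φ i * (if ‖y - i‖ ≤ (p : ℝ) ^ (-(N : ℤ)) then (1 : ℝ) else 0)) ∂μ := by
  have hp : (1 : ℝ) ≤ p := by exact_mod_cast (Fact.out : p.Prime).one_le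
  have hrR : (p : ℝ) ^ (-(N : ℤ)) ≤ (p : ℝ) ^ (N : ℤ) := zpow_le_zpow_right₀ hp (by omega)
  exact integral_mul_indicator_norm_sub_le μ (fun z => J ‖z‖) _
    (fun _ hy => norm_le_of_sum_mul_indicator_ne_zero hrR hGmem hy) x

/-- The truncated convolution `J_N * P_N φ` equals the restriction to `B_N^n` of the full
convolution `J * P_N φ`, where `J_N(‖x‖) = J(‖x‖)·Ω(p^{-N}‖x‖)` and
`P_N φ = Σ_{i ∈ G_N} φ(i)·Ω(p^N ‖x - i‖)`. -/
theorem stmt8 (p : ℕ) [Fact p.Prime] (n : ℕ)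
    [MeasurableSpace (Fin n → ℚ_[p])] [BorelSpace (Fin n → ℚ_[p])]
    (μ : Measure (Fin n → ℚ_[p])) [μ.IsAddHaarMeasure]
    (hμ : μ (Metric.closedBall 0 1) = 1)
    (J : ℝ → ℝ)
    (hJc : Continuous fun x : Fin n → ℚ_[p] => J ‖x‖)
    (hJ0 : ∀ x : Fin n → ℚ_[p], 0 ≤ J ‖x‖)
    (hJ1 : ∫ x, J ‖x‖ ∂μ = 1)
    (N : ℕ) (hN : 1 ≤ N)
    (G : Finset (Fin n → ℚ_[p]))
    (hGmem : ∀ i ∈ G, ‖i‖ ≤ (p : ℝ) ^ (N : ℤ))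
    (hGsep : ∀ i ∈ G, ∀ j ∈ G, i ≠ j → (p : ℝ) ^ (-(N : ℤ)) < ‖i - j‖)
    (hGcov : ∀ x : Fin n → ℚ_[p], ‖x‖ ≤ (p : ℝ) ^ (N : ℤ) →
      ∃ i ∈ G, ‖x - i‖ ≤ (p : ℝ) ^ (-(N : ℤ)))
    (φ : C₀(Fin n → ℚ_[p], ℝ)) (x : Fin n → ℚ_[p]) :
    (∫ y, (J ‖x - y‖ * (if ‖x - y‖ ≤ (p : ℝ) ^ (N : ℤ) then (1 : ℝ) else 0)) *
        (∑ i ∈ G, φ i * (if ‖y - i‖ ≤ (p : ℝ) ^ (-(N : ℤ)) then (1 : ℝ) else 0)) ∂μ)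
      = (if ‖x‖ ≤ (p : ℝ) ^ (N : ℤ) then (1 : ℝ) else 0) *
        ∫ y, J ‖x - y‖ *
          (∑ i ∈ G, φ i * (if ‖y - i‖ ≤ (p : ℝ) ^ (-(N : ℤ)) then (1 : ℝ) else 0)) ∂μ :=
  stmt8_general p n μ J N G hGmem φ x
end

section
/- Let ũ be a bounded function with Aũ + λf(ũ) = 0 (where Aφ = φ − J*φ), f ∈ C²(ℝ), and suppose f′(ũ(x)) ≥ δ > 0 for all x. Then for ε, β > 0 sufficiently small, the functions ū(x,t) = ũ(x) + εe^{−βt} and u̲(x,t) = ũ(x) − εe^{−βt} satisfy P ū + λf(ū) ≥ 0 and P u̲ + λf(u̲) ≤ 0 for all x ∈ ℚ_p^n and t ≥ 0, where Pw = ∂w/∂t − (J*w − w). -/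
/-!
Since `∫ J = 1`, convolution with `J` fixes constants, so with `s = εe^{-βt} ≤ ε` the stationary
equation reduces `Pū + λf(ū)` to `-βs + λ(f(ũ + s) - f(ũ))`, and `Pu̲ + λf(u̲)` to
`βs - λ(f(ũ) - f(ũ - s))`. By uniform continuity of `f'` near the bounded range of `ũ`, `f' ≥ δ/2`
within a fixed distance of that range, so both differences of `f` are at least `δs/2`, and
`β ≤ λδ/2` gives the signs.
-/

open MeasureTheory

theorem integral_mul_add_const_of_integral_eq_one {G : Type*} [AddGroup G] [MeasurableSpace G]
    [MeasurableAdd G] [MeasurableNeg G] {μ : Measure G} [μ.IsNegInvariant] [μ.IsAddLeftInvariant]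
    {K u : G → ℝ} (hK : ∫ y, K y ∂μ = 1) (hu : AEStronglyMeasurable u μ) {C : ℝ}
    (hC : ∀ y, |u y| ≤ C) (x : G) (r : ℝ) :
    ∫ y, K (x - y) * (u y + r) ∂μ = (∫ y, K (x - y) * u y ∂μ) + r := by
  have hKint : Integrable K μ := by
    by_contra h
    rw [integral_undef h] at hK
    exact zero_ne_one hK
  have hKx : Integrable (fun y => K (x - y)) μ := hKint.comp_sub_left x
  have hKu : Integrable (fun y => K (x - y) * u y) μ :=
    hKx.mul_bdd hu (Filter.Eventually.of_forall hC)
  simp only [mul_add]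
  rw [integral_add hKu (hKx.mul_const r), integral_mul_const, integral_sub_left_eq_self K μ x, hK,
    one_mul]

theorem exists_pos_forall_sub_le_of_continuous {g : ℝ → ℝ} (hg : Continuous g) (C : ℝ) {ε : ℝ}
    (hε : 0 < ε) : ∃ η > 0, ∀ a, |a| ≤ C → ∀ c, |c - a| ≤ η → g a - ε ≤ g c := by
  have hunif := (isCompact_Icc (a := -C) (b := C)).uniformContinuousAt_of_continuousAt g
    (fun a _ => hg.continuousAt) (Metric.dist_mem_uniformity hε)
  obtain ⟨η, hη, hclose⟩ := Metric.mem_uniformity_dist.mp hunif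
  refine ⟨η / 2, half_pos hη, fun a ha c hc => ?_⟩
  have hac : dist a c < η := by rw [Real.dist_eq, abs_sub_comm]; linarith
  have hgac : dist (g a) (g c) < ε := hclose hac (abs_le.mp ha)
  rw [Real.dist_eq] at hgac
  linarith [(abs_lt.mp hgac).2]

theorem exists_pos_half_mul_le_sub_of_le_deriv {f : ℝ → ℝ} (hf : ContDiff ℝ 1 f) (C : ℝ) {δ : ℝ}
    (hδ : 0 < δ) : ∃ η > 0, ∀ a, |a| ≤ C → δ ≤ deriv f a → ∀ s, 0 ≤ s → s ≤ η →
      δ / 2 * s ≤ f (a + s) - f a ∧ δ / 2 * s ≤ f a - f (a - s) := by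
  obtain ⟨η, hη, hclose⟩ :=
    exists_pos_forall_sub_le_of_continuous (hf.continuous_deriv le_rfl) C (half_pos hδ)
  refine ⟨η, hη, fun a ha hδa s hs hsη => ?_⟩
  have hmono := (convex_Icc (a - η) (a + η)).mul_sub_le_image_sub_of_le_deriv
    hf.continuous.continuousOn (hf.differentiable one_ne_zero).differentiableOn (C := δ / 2)
    (fun c hc => by
      rw [interior_Icc] at hc
      linarith [hclose a ha c (abs_le.mpr ⟨by linarith [hc.1], by linarith [hc.2]⟩)])
  have hmem : ∀ c, |c - a| ≤ η → c ∈ Set.Icc (a - η) (a + η) := fun c hc =>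
    ⟨by linarith [(abs_le.mp hc).1], by linarith [(abs_le.mp hc).2]⟩
  have ha_mem : a ∈ Set.Icc (a - η) (a + η) := hmem a (by simpa using hη.le)
  have hs_mem : ∀ c, |c| = s → a + c ∈ Set.Icc (a - η) (a + η) := fun c hc =>
    hmem _ (by rw [add_sub_cancel_left, hc]; exact hsη)
  constructor
  · simpa using hmono a ha_mem (a + s) (hs_mem s (abs_of_nonneg hs)) (by linarith)
  · simpa [← sub_eq_add_neg] using
      hmono (a + -s) (hs_mem (-s) (by rw [abs_neg, abs_of_nonneg hs])) a ha_mem (by linarith)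

theorem stmt18_general (p : ℕ) [Fact p.Prime] (n : ℕ)
    [MeasurableSpace (Fin n → ℚ_[p])] [BorelSpace (Fin n → ℚ_[p])]
    (μ : Measure (Fin n → ℚ_[p])) [μ.IsAddHaarMeasure]
    (J : ℝ → ℝ)
    (hJ1 : ∫ x, J ‖x‖ ∂μ = 1)
    (f : ℝ → ℝ) (hf : ContDiff ℝ 2 f) (lam : ℝ) (hlam : 0 < lam)
    (δ : ℝ) (hδ : 0 < δ)
    (ut : (Fin n → ℚ_[p]) → ℝ) (hcont : Continuous ut)
    (Cb : ℝ) (hb : ∀ x, |ut x| ≤ Cb)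
    (heq : ∀ x, (ut x - ∫ y, J ‖x - y‖ * ut y ∂μ) + lam * f (ut x) = 0)
    (hderiv : ∀ x, δ ≤ deriv f (ut x)) :
    ∃ ε₀ > (0 : ℝ), ∃ β₀ > (0 : ℝ), ∀ ε β : ℝ, 0 < ε → ε ≤ ε₀ → 0 < β → β ≤ β₀ →
      ∀ x : Fin n → ℚ_[p], ∀ t : ℝ, 0 ≤ t →
        (0 ≤ -(β * ε * Real.exp (-(β * t)))
              - ((∫ y, J ‖x - y‖ * (ut y + ε * Real.exp (-(β * t))) ∂μ)
                  - (ut x + ε * Real.exp (-(β * t))))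
              + lam * f (ut x + ε * Real.exp (-(β * t)))) ∧
        (β * ε * Real.exp (-(β * t))
              - ((∫ y, J ‖x - y‖ * (ut y - ε * Real.exp (-(β * t))) ∂μ)
                  - (ut x - ε * Real.exp (-(β * t))))
              + lam * f (ut x - ε * Real.exp (-(β * t))) ≤ 0) := by
  obtain ⟨η, hη, hgrowth⟩ := exists_pos_half_mul_le_sub_of_le_deriv (hf.of_le one_le_two) Cb hδ
  refine ⟨η, hη, lam * δ / 2, by positivity, fun ε β hε hεη hβ hβ₀ x t ht => ?_⟩
  set s := ε * Real.exp (-(β * t))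
  have hs_nonneg : 0 ≤ s := by positivity
  have hs_le : s ≤ η := by
    have : Real.exp (-(β * t)) ≤ 1 := Real.exp_le_one_iff.mpr (by nlinarith)
    nlinarith
  have hconv : ∀ r, ∫ y, J ‖x - y‖ * (ut y + r) ∂μ = (∫ y, J ‖x - y‖ * ut y ∂μ) + r :=
    integral_mul_add_const_of_integral_eq_one (K := fun z => J ‖z‖) hJ1
      hcont.aestronglyMeasurable hb x
  obtain ⟨hup, hdown⟩ := hgrowth (ut x) (hb x) (hderiv x) s hs_nonneg hs_le
  have hβs : β * ε * Real.exp (-(β * t)) = β * s := by ring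
  have hdamp : β * s ≤ lam * (δ / 2 * s) := by nlinarith
  have hconv_sub := hconv (-s)
  simp only [← sub_eq_add_neg] at hconv_sub
  rw [hβs, hconv, hconv_sub]
  constructor
  · linarith [heq x, mul_le_mul_of_nonneg_left hup hlam.le]
  · linarith [heq x, mul_le_mul_of_nonneg_left hdown hlam.le]

/-- If `ũ` is a bounded continuous stationary solution of `Aũ + λf(ũ) = 0`
(`Aφ = φ - J*φ`), with `f ∈ C²` and `f'(ũ(x)) ≥ δ > 0` for all `x`, then for `ε, β > 0`
sufficiently small, `ū = ũ + εe^{-βt}` is a supersolution and `u̲ = ũ - εe^{-βt}` is a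
subsolution: `Pū + λf(ū) ≥ 0` and `Pu̲ + λf(u̲) ≤ 0`, where `Pw = ∂w/∂t - (J*w - w)`. -/
theorem stmt18 (p : ℕ) [Fact p.Prime] (n : ℕ)
    [MeasurableSpace (Fin n → ℚ_[p])] [BorelSpace (Fin n → ℚ_[p])]
    (μ : Measure (Fin n → ℚ_[p])) [μ.IsAddHaarMeasure]
    (hμ : μ (Metric.closedBall 0 1) = 1)
    (J : ℝ → ℝ)
    (hJc : Continuous fun x : Fin n → ℚ_[p] => J ‖x‖)
    (hJ0 : ∀ x : Fin n → ℚ_[p], 0 ≤ J ‖x‖)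
    (hJ1 : ∫ x, J ‖x‖ ∂μ = 1)
    (f : ℝ → ℝ) (hf : ContDiff ℝ 2 f) (lam : ℝ) (hlam : 0 < lam)
    (δ : ℝ) (hδ : 0 < δ)
    (ut : (Fin n → ℚ_[p]) → ℝ) (hcont : Continuous ut)
    (Cb : ℝ) (hb : ∀ x, |ut x| ≤ Cb)
    (heq : ∀ x, (ut x - ∫ y, J ‖x - y‖ * ut y ∂μ) + lam * f (ut x) = 0)
    (hderiv : ∀ x, δ ≤ deriv f (ut x)) :
    ∃ ε₀ > (0 : ℝ), ∃ β₀ > (0 : ℝ), ∀ ε β : ℝ, 0 < ε → ε ≤ ε₀ → 0 < β → β ≤ β₀ →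
      ∀ x : Fin n → ℚ_[p], ∀ t : ℝ, 0 ≤ t →
        (0 ≤ -(β * ε * Real.exp (-(β * t)))
              - ((∫ y, J ‖x - y‖ * (ut y + ε * Real.exp (-(β * t))) ∂μ)
                  - (ut x + ε * Real.exp (-(β * t))))
              + lam * f (ut x + ε * Real.exp (-(β * t)))) ∧
        (β * ε * Real.exp (-(β * t))
              - ((∫ y, J ‖x - y‖ * (ut y - ε * Real.exp (-(β * t))) ∂μ)
                  - (ut x - ε * Real.exp (-(β * t))))
              + lam * f (ut x - ε * Real.exp (-(β * t))) ≤ 0) :=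
  stmt18_general p n μ J hJ1 f hf lam hlam δ hδ ut hcont Cb hb heq hderiv
end
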